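/- arXiv:2310.13254 — 7 statements merged into one kernel-verified Lean document; each statement's English description precedes it below -/
import Mathlib

section
/- Let h : ℝ → ℝ be strictly decreasing with h(p*) = 0, and let p : ℝ → ℝ be differentiable with p'(t) = h(p(t)) for all t ≥ 0. Then the function t ↦ |p(t) − p*| is antitone (nonincreasing) on [0, ∞). -/
/-!
The squared distance `V(t) = (p t - p*)²` is a Lyapunov function: `V' = 2 (p - p*) h(p) ≤ 0`,
because a decreasing `h` vanishing at `p*` has the sign opposite to `x - p*`.
-/

theorem Antitone.sub_mul_nonpos_of_eq_zero {R : Type*} [Ring R] [LinearOrder R]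
    [IsOrderedRing R] {h : R → R} (hh : Antitone h) {a : R}
    (ha : h a = 0) (x : R) : (x - a) * h x ≤ 0 := by
  rcases le_total x a with hxa | hax
  · exact mul_nonpos_of_nonpos_of_nonneg (sub_nonpos.mpr hxa) (ha ▸ hh hxa)
  · exact mul_nonpos_of_nonneg_of_nonpos (sub_nonneg.mpr hax) (ha ▸ hh hax)

theorem antitoneOn_sq_sub_of_mul_deriv_nonpos {p : ℝ → ℝ} {a : ℝ} {s : Set ℝ}
    (hs : Convex ℝ s) (hcont : ContinuousOn p s) (hdiff : DifferentiableOn ℝ p (interior s))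
    (hsign : ∀ t ∈ interior s, (p t - a) * deriv p t ≤ 0) :
    AntitoneOn (fun t => (p t - a) ^ 2) s := by
  have hderiv : ∀ t ∈ interior s,
      HasDerivAt (fun t => (p t - a) ^ 2) (2 * ((p t - a) * deriv p t)) t := by
    intro t ht
    have hp := (hdiff.differentiableAt (isOpen_interior.mem_nhds ht)).hasDerivAt
    exact ((hp.sub_const a).fun_pow 2).congr_deriv (by push_cast; ring)
  refine antitoneOn_of_deriv_nonpos hs ((hcont.sub continuousOn_const).pow 2)
    (fun t ht => (hderiv t ht).differentiableAt.differentiableWithinAt) fun t ht => ?_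
  rw [(hderiv t ht).deriv]
  linarith [hsign t ht]

/-- Lyapunov stability for the scalar price dynamics: if `h` is strictly decreasing with
`h(p*) = 0` and `p` is a differentiable trajectory with `p'(t) = h(p(t))` for all `t ≥ 0`,
then `t ↦ |p(t) - p*|` is nonincreasing on `[0, ∞)`. -/
theorem dist_to_equilibrium_antitone
    (h : ℝ → ℝ) (hanti : StrictAnti h)
    (pstar : ℝ) (hzero : h pstar = 0)
    (p : ℝ → ℝ) (hdiff : Differentiable ℝ p)
    (hode : ∀ t : ℝ, 0 ≤ t → deriv p t = h (p t)) :
    AntitoneOn (fun t => |p t - pstar|) (Set.Ici (0 : ℝ)) := by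
  have hsq : AntitoneOn (fun t => (p t - pstar) ^ 2) (Set.Ici 0) := by
    refine antitoneOn_sq_sub_of_mul_deriv_nonpos (convex_Ici 0) hdiff.continuous.continuousOn
      hdiff.differentiableOn fun t ht => ?_
    rw [hode t (interior_subset ht)]
    exact hanti.antitone.sub_mul_nonpos_of_eq_zero hzero (p t)
  exact fun s hs t ht hst => sq_le_sq.mp (hsq hs ht hst)
end

section
/- Let h : ℝ → ℝ be continuous and strictly decreasing with h(p*) = 0, and let p : ℝ → ℝ be differentiable with p'(t) = h(p(t)) for all t ≥ 0. Then p(t) → p* as t → ∞. -/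
/-!
`V = (p - p*)²` is a Lyapunov function: `V' = 2 (p - p*) h(p) ≤ 0`, since `h` changes sign
from positive to negative at `p*`. If `V` stayed above some `ε > 0`, the trajectory would stay in
the compact set `{ε ≤ (x - p*)² ≤ V(0)}`, on which `(x - p*) h(x)` is bounded away from `0`;
then `V` would decrease at least linearly and become negative.
-/

open Filter Set Topology

theorem IsCompact.exists_forall_le_of_forall_lt {α β : Type*} [TopologicalSpace α]
    [LinearOrder β] [TopologicalSpace β] [ClosedIciTopology β] [NoMinOrder β]
    {K : Set α} (hK : IsCompact K) {g : α → β} (hg : ContinuousOn g K) {b : β}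
    (hlt : ∀ x ∈ K, g x < b) : ∃ c < b, ∀ x ∈ K, g x ≤ c := by
  rcases K.eq_empty_or_nonempty with rfl | hne
  · obtain ⟨c, hc⟩ := exists_lt b
    exact ⟨c, hc, by simp⟩
  · obtain ⟨x₀, hx₀, hmax⟩ := hK.exists_isMaxOn hne hg
    exact ⟨g x₀, hlt x₀ hx₀, hmax⟩

theorem sub_le_mul_sub_of_hasDerivAt_le {f f' : ℝ → ℝ} {C : ℝ}
    (hf : ∀ t, 0 ≤ t → HasDerivAt f (f' t) t) (hf' : ∀ t, 0 ≤ t → f' t ≤ C)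
    {s t : ℝ} (hs : 0 ≤ s) (hst : s ≤ t) : f t - f s ≤ C * (t - s) := by
  have hint : ∀ x ∈ interior (Ici (0 : ℝ)), 0 ≤ x := by
    simp only [interior_Ici, mem_Ioi]
    exact fun x hx => hx.le
  refine (convex_Ici 0).image_sub_le_mul_sub_of_deriv_le
    (fun x hx => (hf x hx).continuousAt.continuousWithinAt)
    (fun x hx => (hf x (hint x hx)).differentiableAt.differentiableWithinAt)
    (fun x hx => ?_) s hs t (hs.trans hst) hst
  rw [(hf x (hint x hx)).deriv]
  exact hf' x (hint x hx)

theorem tendsto_atBot_of_hasDerivAt_le_neg {f f' : ℝ → ℝ} {c : ℝ} (hc : c < 0)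
    (hf : ∀ t, 0 ≤ t → HasDerivAt f (f' t) t) (hf' : ∀ t, 0 ≤ t → f' t ≤ c) :
    Tendsto f atTop atBot := by
  have hlin : Tendsto (fun t => f 0 + c * t) atTop atBot :=
    tendsto_atBot_add_const_left _ _ (tendsto_id.const_mul_atTop_of_neg hc)
  refine tendsto_atBot_mono' atTop ?_ hlin
  filter_upwards [eventually_ge_atTop 0] with t ht
  have := sub_le_mul_sub_of_hasDerivAt_le hf hf' le_rfl ht
  linarith

theorem HasDerivAt.sub_sq {p : ℝ → ℝ} {p' a t : ℝ} (hp : HasDerivAt p p' t) :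
    HasDerivAt (fun s => (p s - a) ^ 2) (2 * ((p t - a) * p')) t :=
  ((hp.sub_const a).fun_pow 2).congr_deriv (by ring)

section Lyapunov

variable {F : ℝ → ℝ} {a : ℝ} {p : ℝ → ℝ}

theorem antitoneOn_sub_sq_of_hasDerivAt (hsign : ∀ x ≠ a, (x - a) * F x < 0)
    (hp : ∀ t, 0 ≤ t → HasDerivAt p (F (p t)) t) :
    AntitoneOn (fun t => (p t - a) ^ 2) (Ici 0) := by
  have hnonpos (x : ℝ) : (x - a) * F x ≤ 0 := by
    rcases eq_or_ne x a with rfl | hx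
    · simp
    · exact (hsign x hx).le
  intro s hs t _ hst
  have := sub_le_mul_sub_of_hasDerivAt_le (fun t ht => (hp t ht).sub_sq)
    (fun t _ => mul_nonpos_of_nonneg_of_nonpos zero_le_two (hnonpos (p t))) hs hst
  linarith

theorem exists_sub_sq_lt_of_hasDerivAt (hF : Continuous F) (hsign : ∀ x ≠ a, (x - a) * F x < 0)
    (hp : ∀ t, 0 ≤ t → HasDerivAt p (F (p t)) t) {ε : ℝ} (hε : 0 < ε) :
    ∃ T, 0 ≤ T ∧ (p T - a) ^ 2 < ε := by
  by_contra! hfar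
  set K := {x ∈ Metric.closedBall a |p 0 - a| | ε ≤ (x - a) ^ 2}
  have hK : IsCompact K := (isCompact_closedBall a _).inter_right
    (isClosed_le continuous_const ((continuous_id.sub continuous_const).pow 2))
  have hpK : ∀ t, 0 ≤ t → p t ∈ K := fun t ht =>
    ⟨(Real.dist_eq _ _).trans_le
      (sq_le_sq.mp (antitoneOn_sub_sq_of_hasDerivAt hsign hp self_mem_Ici ht ht)), hfar t ht⟩
  obtain ⟨c, hc, hcK⟩ := hK.exists_forall_le_of_forall_lt (g := fun x => (x - a) * F x)
    ((continuous_id.sub continuous_const).mul hF).continuousOn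
    (fun x hx => hsign x fun hxa => hε.not_ge (by simpa [hxa] using hx.2))
  have hbot := tendsto_atBot_of_hasDerivAt_le_neg (by linarith : 2 * c < 0)
    (fun t ht => (hp t ht).sub_sq (a := a))
    (fun t ht => by have := hcK _ (hpK t ht); linarith)
  obtain ⟨t, hneg⟩ := (hbot.eventually (eventually_lt_atBot 0)).exists
  exact (sq_nonneg _).not_gt hneg

theorem tendsto_of_hasDerivAt_of_sub_mul_neg (hF : Continuous F)
    (hsign : ∀ x ≠ a, (x - a) * F x < 0) (hp : ∀ t, 0 ≤ t → HasDerivAt p (F (p t)) t) :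
    Tendsto p atTop (𝓝 a) := by
  rw [Metric.tendsto_atTop]
  intro ε hε
  obtain ⟨T, hT, hVT⟩ := exists_sub_sq_lt_of_hasDerivAt hF hsign hp (pow_pos hε 2)
  refine ⟨T, fun t ht => ?_⟩
  have hVt := antitoneOn_sub_sq_of_hasDerivAt hsign hp hT (hT.trans ht) ht
  rw [Real.dist_eq]
  exact abs_lt_of_sq_lt_sq (hVt.trans_lt hVT) hε.le

end Lyapunov

theorem StrictAnti.sub_mul_neg {R : Type*} [Ring R] [LinearOrder R] [IsStrictOrderedRing R]
    {h : R → R} (hanti : StrictAnti h) {a : R} (ha : h a = 0) {x : R} (hx : x ≠ a) :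
    (x - a) * h x < 0 := by
  rcases hx.lt_or_gt with hlt | hgt
  · exact mul_neg_of_neg_of_pos (sub_neg.2 hlt) (ha ▸ hanti hlt)
  · exact mul_neg_of_pos_of_neg (sub_pos.2 hgt) (ha ▸ hanti hgt)

/-- Global asymptotic stability in the single time-period case (Theorem 1): if `h` is
continuous and strictly decreasing with `h(p*) = 0`, and `p` is a differentiable trajectory
with `p'(t) = h(p(t))` for all `t ≥ 0`, then `p(t) → p*` as `t → ∞`. -/
theorem tendsto_equilibrium_scalar
    (h : ℝ → ℝ) (hcont : Continuous h) (hanti : StrictAnti h)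
    (pstar : ℝ) (hzero : h pstar = 0)
    (p : ℝ → ℝ) (hdiff : Differentiable ℝ p)
    (hode : ∀ t : ℝ, 0 ≤ t → deriv p t = h (p t)) :
    Tendsto p atTop (nhds pstar) :=
  tendsto_of_hasDerivAt_of_sub_mul_neg hcont (fun _ hx => hanti.sub_mul_neg hzero hx)
    fun t ht => hode t ht ▸ (hdiff t).hasDerivAt
end

section
/- Let I be a finite index set, f_i : ℝ → ℝ for i ∈ I, and g : ℝ → ℝ convex and differentiable. Let x*_i ∈ ℝ for i ∈ I, set s* = Σ_i x*_i and p* = g'(s*), and suppose each x*_i is the unique minimizer of y ↦ f_i(y) + p*·y in the strict sense: f_i(x*_i) + p*·x*_i < f_i(y) + p*·y for every y ≠ x*_i. Then for every choice x̂_i ∈ ℝ (i ∈ I), Σ_i f_i(x*_i) + g(s*) ≤ Σ_i f_i(x̂_i) + g(Σ_i x̂_i). That is, (x*_i) globally minimizes the social welfare cost x ↦ Σ_i f_i(x_i) + g(Σ_i x_i). -/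
open Finset

lemma tangent_le (g : ℝ → ℝ) (hg : ConvexOn ℝ Set.univ g) (hgd : Differentiable ℝ g)
    (s y : ℝ) : g s + deriv g s * (y - s) ≤ g y := by
  rcases lt_trichotomy y s with h | h | h
  · have := hg.slope_le_deriv (Set.mem_univ y) (Set.mem_univ s) h (hgd s)
    rw [slope_def_field] at this
    have hd : s - y > 0 := by linarith
    rw [div_le_iff₀ hd] at this
    nlinarith
  · simp [h]
  · have := hg.deriv_le_slope (Set.mem_univ s) (Set.mem_univ y) h (hgd s)
    rw [slope_def_field] at this
    have hd : y - s > 0 := by linarith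
    rw [le_div_iff₀ hd] at this
    nlinarith

/-- Social optimality of the equilibrium price in the single time-period case (T = 1):
if `g` is convex and differentiable, `p* = g'(Σ_i x*_i)`, and each `x*_i` is the strictly
unique minimizer of `y ↦ f_i(y) + p*·y`, then `(x*_i)` globally minimizes the social
welfare cost `x ↦ Σ_i f_i(x_i) + g(Σ_i x_i)`. -/
theorem equilibrium_price_induces_social_optimum
    (I : Type*) [Fintype I]
    (f : I → ℝ → ℝ) (g : ℝ → ℝ)
    (hgconv : ConvexOn ℝ Set.univ g) (hgdiff : Differentiable ℝ g)
    (xstar : I → ℝ) (sstar pstar : ℝ)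
    (hs : sstar = ∑ i, xstar i) (hp : pstar = deriv g sstar)
    (hmin : ∀ i : I, ∀ y : ℝ, y ≠ xstar i →
      f i (xstar i) + pstar * xstar i < f i y + pstar * y) :
    ∀ xhat : I → ℝ,
      (∑ i, f i (xstar i)) + g sstar ≤ (∑ i, f i (xhat i)) + g (∑ i, xhat i) := by
  intro xhat
  have hsum : (∑ i, (f i (xstar i) + pstar * xstar i)) ≤
      ∑ i, (f i (xhat i) + pstar * xhat i) := by
    apply Finset.sum_le_sum
    intro i _
    by_cases h : xhat i = xstar i
    · rw [h]
    · exact (hmin i (xhat i) h).le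
  have htan := tangent_le g hgconv hgdiff sstar (∑ i, xhat i)
  rw [Finset.sum_add_distrib, Finset.sum_add_distrib, ← Finset.mul_sum, ← Finset.mul_sum,
    ← hs] at hsum
  rw [← hp] at htan
  linarith
end

section
/- Let n ≥ 1 and F : ℝⁿ → ℝⁿ be continuous and decreasing in the monotone-operator sense, i.e., ⟨F(p) − F(q), p − q⟩ ≤ 0 for all p, q ∈ ℝⁿ. Then there exists exactly one p* ∈ ℝⁿ with F(p*) = p*. -/
/-! `p ↦ p - F p` is strongly monotone, hence injective, so it suffices to find a zero of a
continuous strongly monotone map `G` on a finite-dimensional space. This goes by induction on the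
dimension: for a unit vector `v`, the induction hypothesis applied to the compression of `G` to
`vᗮ` gives, for every `t`, a point `x t ∈ vᗮ` with `G (x t + t • v) ∈ ℝ ∙ v`. Strong monotonicity
makes `x` continuous and `t ↦ ⟪v, G (x t + t • v)⟫` strongly increasing, so the intermediate value
theorem yields a zero. -/

open RealInnerProductSpace Module Filter Topology

theorem exists_eq_zero_of_mul_sq_le {g : ℝ → ℝ} (hg : Continuous g) {c : ℝ} (hc : 0 < c)
    (hgrow : ∀ s t, c * (t - s) ^ 2 ≤ (g t - g s) * (t - s)) : ∃ t, g t = 0 := by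
  set T := |g 0| / c + 1
  have hT : |g 0| < c * T := by
    rw [mul_add, mul_div_cancel₀ _ hc.ne', mul_one]; linarith
  have hTpos : 0 < T := by positivity
  have hright : 0 ≤ g T := by
    have := hgrow 0 T
    nlinarith [le_abs_self (g 0), neg_abs_le (g 0)]
  have hleft : g (-T) ≤ 0 := by
    have := hgrow (-T) 0
    nlinarith [le_abs_self (g 0), neg_abs_le (g 0)]
  obtain ⟨t, -, ht⟩ := intermediate_value_Icc (by linarith) hg.continuousOn ⟨hleft, hright⟩
  exact ⟨t, ht⟩

section

variable {E : Type*} [NormedAddCommGroup E] [InnerProductSpace ℝ E]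

def StronglyMonotone (c : ℝ) (G : E → E) : Prop :=
  ∀ p q, c * ‖p - q‖ ^ 2 ≤ ⟪G p - G q, p - q⟫

namespace StronglyMonotone

variable {c : ℝ} {G : E → E}

theorem mul_norm_sub_le (hG : StronglyMonotone c G) (p q : E) :
    c * ‖p - q‖ ≤ ‖G p - G q‖ := by
  rcases (norm_nonneg (p - q)).eq_or_lt with h | h
  · simp [← h]
  have := (hG p q).trans (real_inner_le_norm _ _)
  rw [sq, ← mul_assoc] at this
  exact le_of_mul_le_mul_right this h

theorem injective (hG : StronglyMonotone c G) (hc : 0 < c) : Function.Injective G := by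
  intro p q hpq
  have h := hG.mul_norm_sub_le p q
  rw [hpq, sub_self, norm_zero] at h
  exact sub_eq_zero.mp (norm_le_zero_iff.mp (nonpos_of_mul_nonpos_right h hc))

theorem orthogonalProjectionOnto_comp (hG : StronglyMonotone c G) (K : Submodule ℝ E)
    [K.HasOrthogonalProjection] (a : E) :
    StronglyMonotone c fun y : K => K.orthogonalProjectionOnto (G (y + a)) := by
  intro y z
  have := hG (y + a) (z + a)
  rw [add_sub_add_right_eq_sub] at this
  simpa [← map_sub] using this

end StronglyMonotone

theorem continuous_of_forall_eq_zero {X : Type*} [TopologicalSpace X]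
    (hc : 0 < c) {H : X → E → E} (hH : ∀ t, StronglyMonotone c (H t))
    (hHcont : ∀ y, Continuous fun t => H t y) {x : X → E} (hx : ∀ t, H t (x t) = 0) :
    Continuous x := by
  refine continuous_iff_continuousAt.mpr fun s => tendsto_iff_norm_sub_tendsto_zero.mpr ?_
  have hbound : ∀ t, ‖x t - x s‖ ≤ c⁻¹ * ‖H t (x s)‖ := fun t => by
    rw [le_inv_mul_iff₀ hc]
    simpa [hx t] using (hH t).mul_norm_sub_le (x t) (x s)
  have hlim : Tendsto (fun t => c⁻¹ * ‖H t (x s)‖) (𝓝 s) (𝓝 (c⁻¹ * ‖H s (x s)‖)) :=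
    ((hHcont (x s)).norm.const_mul c⁻¹).continuousAt
  rw [hx s, norm_zero, mul_zero] at hlim
  exact squeeze_zero (fun _ => norm_nonneg _) hbound hlim

namespace StronglyMonotone

variable {c : ℝ} {G : E → E}

theorem exists_eq_zero_of_forall_orthogonal (hG : StronglyMonotone c G) (hc : 0 < c)
    (hGc : Continuous G) {v : E} (hv : ‖v‖ = 1)
    (hK : ∀ a : E, ∃ y : (ℝ ∙ v)ᗮ, (ℝ ∙ v)ᗮ.orthogonalProjectionOnto (G (y + a)) = 0) :
    ∃ p, G p = 0 := by
  choose x hx using fun t : ℝ => hK (t • v)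
  have hxc : Continuous fun t => (x t : E) :=
    continuous_subtype_val.comp <| continuous_of_forall_eq_zero hc
      (fun t => hG.orthogonalProjectionOnto_comp _ (t • v)) (fun y => by fun_prop) hx
  set g : ℝ → ℝ := fun t => ⟪v, G (x t + t • v)⟫
  have hline : ∀ t, G (x t + t • v) = g t • v := fun t => by
    have hmem : G (x t + t • v) ∈ (ℝ ∙ v)ᗮᗮ :=
      Submodule.orthogonalProjectionOnto_eq_zero_iff.mp (hx t)
    rw [Submodule.orthogonal_orthogonal] at hmem
    rw [← Submodule.starProjection_unit_singleton ℝ hv,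
      Submodule.starProjection_eq_self_iff.mpr hmem]
  have hgrow : ∀ s t, c * (t - s) ^ 2 ≤ (g t - g s) * (t - s) := fun s t => by
    have hperp : ⟪(x t : E) - x s, v⟫ = 0 :=
      Submodule.mem_orthogonal_singleton_iff_inner_left.mp (x t - x s).2
    have hsub : (x t + t • v) - (x s + s • v) = ((x t : E) - x s) + (t - s) • v := by
      rw [sub_smul]; abel
    have hpyth : ‖((x t : E) - x s) + (t - s) • v‖ ^ 2 = ‖(x t : E) - x s‖ ^ 2 + (t - s) ^ 2 := by
      rw [norm_add_sq_real, real_inner_smul_right, hperp, norm_smul, hv, mul_one,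
        Real.norm_eq_abs, sq_abs]
      ring
    calc c * (t - s) ^ 2 ≤ c * ‖((x t : E) - x s) + (t - s) • v‖ ^ 2 := by
          rw [hpyth]; nlinarith [sq_nonneg ‖(x t : E) - x s‖]
      _ ≤ _ := by simpa [hsub] using hG (x t + t • v) (x s + s • v)
      _ = (g t - g s) * (t - s) := by
          rw [hline, hline, ← sub_smul, real_inner_smul_left, inner_add_right, real_inner_comm,
            hperp, zero_add, real_inner_smul_right, real_inner_self_eq_norm_sq, hv]
          ring
  obtain ⟨t, ht⟩ := exists_eq_zero_of_mul_sq_le (by fun_prop) hc hgrow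
  exact ⟨x t + t • v, by rw [hline, ht, zero_smul]⟩

theorem exists_eq_zero [FiniteDimensional ℝ E] (hG : StronglyMonotone c G) (hc : 0 < c)
    (hGc : Continuous G) : ∃ p, G p = 0 := by
  induction hdim : finrank ℝ E generalizing E with
  | zero =>
    have : Subsingleton E := finrank_zero_iff.mp hdim
    exact ⟨0, Subsingleton.elim _ _⟩
  | succ m ih =>
    have : Fact (finrank ℝ E = m + 1) := ⟨hdim⟩
    have : Nontrivial E := nontrivial_of_finrank_eq_succ hdim
    obtain ⟨v, hv⟩ := exists_norm_eq E zero_le_one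
    have hv0 : v ≠ 0 := norm_ne_zero_iff.mp (hv ▸ one_ne_zero)
    refine hG.exists_eq_zero_of_forall_orthogonal hc hGc hv fun a => ?_
    exact ih (hG.orthogonalProjectionOnto_comp _ a) (by fun_prop)
      (Submodule.finrank_orthogonal_span_singleton hv0)

theorem existsUnique_eq_zero [FiniteDimensional ℝ E] (hG : StronglyMonotone c G) (hc : 0 < c)
    (hGc : Continuous G) : ∃! p, G p = 0 :=
  let ⟨p, hp⟩ := hG.exists_eq_zero hc hGc
  ⟨p, hp, fun _ hq => hG.injective hc (hq.trans hp.symm)⟩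

end StronglyMonotone

theorem stronglyMonotone_id_sub {F : E → E} (hF : ∀ p q, ⟪F p - F q, p - q⟫ ≤ 0) :
    StronglyMonotone 1 fun p => p - F p := by
  intro p q
  have h := hF p q
  rw [sub_sub_sub_comm, inner_sub_left, real_inner_self_eq_norm_sq]
  linarith

end

theorem existsUnique_fixed_point_of_decreasing_general
    (n : ℕ)
    (F : EuclideanSpace ℝ (Fin n) → EuclideanSpace ℝ (Fin n))
    (hcont : Continuous F)
    (hdec : ∀ p q : EuclideanSpace ℝ (Fin n), ⟪F p - F q, p - q⟫ ≤ 0) :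
    ∃! pstar : EuclideanSpace ℝ (Fin n), F pstar = pstar := by
  simpa only [sub_eq_zero, eq_comm] using
    (stronglyMonotone_id_sub hdec).existsUnique_eq_zero one_pos (continuous_id.sub hcont)

/-- Existence and uniqueness of the equilibrium price in the multi time-period case
(Lemma 1): if `F : ℝⁿ → ℝⁿ` is continuous and decreasing in the monotone-operator sense
(`⟨F p - F q, p - q⟩ ≤ 0` for all `p, q`), then `F` has exactly one fixed point. -/
theorem existsUnique_fixed_point_of_decreasing
    (n : ℕ) (hn : 1 ≤ n)
    (F : EuclideanSpace ℝ (Fin n) → EuclideanSpace ℝ (Fin n))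
    (hcont : Continuous F)
    (hdec : ∀ p q : EuclideanSpace ℝ (Fin n), ⟪F p - F q, p - q⟫ ≤ 0) :
    ∃! pstar : EuclideanSpace ℝ (Fin n), F pstar = pstar :=
  existsUnique_fixed_point_of_decreasing_general n F hcont hdec
end

section
/- Let T ≥ 1, I a finite index set, f_i : ℝ^T → ℝ for i ∈ I, and g : ℝ^T → ℝ convex and differentiable. Let x*_i ∈ ℝ^T for i ∈ I, set s* = Σ_i x*_i and p* = ∇g(s*), and suppose each x*_i is the unique minimizer of y ↦ f_i(y) + ⟨p*, y⟩ in the strict sense: f_i(x*_i) + ⟨p*, x*_i⟩ < f_i(y) + ⟨p*, y⟩ for every y ≠ x*_i. Then for every choice x̂_i ∈ ℝ^T (i ∈ I), Σ_i f_i(x*_i) + g(s*) ≤ Σ_i f_i(x̂_i) + g(Σ_i x̂_i). -/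
/-!
By convexity, `p* = ∇g(s*)` is a subgradient of `g` at `s*`:
`g(s*) + ⟪p*, z - s*⟫ ≤ g(z)` for all `z`. Summing the local optimality inequalities
`f_i(x*_i) + ⟪p*, x*_i⟫ ≤ f_i(x̂_i) + ⟪p*, x̂_i⟫` and adding the subgradient inequality at
`z = Σ_i x̂_i`, the price terms cancel.
-/

open Finset RealInnerProductSpace Set

theorem ConvexOn.add_fderiv_sub_le {E : Type*} [NormedAddCommGroup E] [NormedSpace ℝ E]
    {g : E → ℝ} {g' : E →L[ℝ] ℝ} {x : E} (hg : ConvexOn ℝ univ g) (hx : HasFDerivAt g g' x)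
    (y : E) : g x + g' (y - x) ≤ g y := by
  have hline : ConvexOn ℝ univ (g ∘ AffineMap.lineMap (k := ℝ) x y) := by
    simpa using hg.comp_affineMap (AffineMap.lineMap (k := ℝ) x y)
  have hderiv : HasDerivAt (g ∘ AffineMap.lineMap (k := ℝ) x y) (g' (y - x)) 0 :=
    (by simpa using hx : HasFDerivAt g g' (AffineMap.lineMap x y (0 : ℝ))).comp_hasDerivAt 0
      AffineMap.hasDerivAt_lineMap
  have hslope := hline.le_slope_of_hasDerivAt (mem_univ 0) (mem_univ 1) one_pos hderiv
  simp only [slope_def_field, Function.comp_apply, AffineMap.lineMap_apply_zero,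
    AffineMap.lineMap_apply_one, sub_zero, div_one] at hslope
  linarith

theorem ConvexOn.add_inner_gradient_sub_le {F : Type*} [NormedAddCommGroup F]
    [InnerProductSpace ℝ F] [CompleteSpace F] {g : F → ℝ} {x : F} (hg : ConvexOn ℝ univ g)
    (hx : DifferentiableAt ℝ g x) (y : F) : g x + ⟪gradient g x, y - x⟫ ≤ g y := by
  simpa using hg.add_fderiv_sub_le hx.hasGradientAt.hasFDerivAt y

theorem isMinOn_sum_add_comp_sum_of_subgradient {ι F : Type*} [Fintype ι]
    [NormedAddCommGroup F] [InnerProductSpace ℝ F] (f : ι → F → ℝ) (g : F → ℝ)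
    (xstar : ι → F) (p : F) (hp : ∀ z, g (∑ i, xstar i) + ⟪p, z - ∑ i, xstar i⟫ ≤ g z)
    (hmin : ∀ i, IsMinOn (fun y => f i y + ⟪p, y⟫) univ (xstar i)) :
    IsMinOn (fun x : ι → F => ∑ i, f i (x i) + g (∑ i, x i)) univ xstar := by
  refine isMinOn_univ_iff.2 fun xhat => ?_
  have hlocal : ∑ i, (f i (xstar i) + ⟪p, xstar i⟫) ≤ ∑ i, (f i (xhat i) + ⟪p, xhat i⟫) :=
    sum_le_sum fun i _ => hmin i (mem_univ (xhat i))
  have hg := hp (∑ i, xhat i)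
  simp only [sum_add_distrib, ← inner_sum, inner_sub_right] at hlocal hg
  linarith

theorem equilibrium_price_induces_social_optimum_multi_general
    (T : ℕ)
    (I : Type*) [Fintype I]
    (f : I → EuclideanSpace ℝ (Fin T) → ℝ) (g : EuclideanSpace ℝ (Fin T) → ℝ)
    (hgconv : ConvexOn ℝ Set.univ g) (hgdiff : Differentiable ℝ g)
    (xstar : I → EuclideanSpace ℝ (Fin T)) (sstar pstar : EuclideanSpace ℝ (Fin T))
    (hs : sstar = ∑ i, xstar i) (hp : pstar = gradient g sstar)
    (hmin : ∀ i : I, ∀ y : EuclideanSpace ℝ (Fin T), y ≠ xstar i →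
      f i (xstar i) + ⟪pstar, xstar i⟫ < f i y + ⟪pstar, y⟫) :
    ∀ xhat : I → EuclideanSpace ℝ (Fin T),
      (∑ i, f i (xstar i)) + g sstar ≤ (∑ i, f i (xhat i)) + g (∑ i, xhat i) := by
  subst hs hp
  have hsub := hgconv.add_inner_gradient_sub_le (hgdiff (∑ i, xstar i))
  have hlocal : ∀ i, IsMinOn (fun y => f i y + ⟪gradient g (∑ i, xstar i), y⟫) univ (xstar i) :=
    fun i => isMinOn_univ_iff.2 fun y =>
      (eq_or_ne y (xstar i)).elim (fun h => h ▸ le_rfl) fun h => (hmin i y h).le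
  intro xhat
  exact isMinOn_sum_add_comp_sum_of_subgradient f g xstar _ hsub hlocal (mem_univ xhat)

/-- Social optimality of the equilibrium price in the multi time-period case (Lemma 1):
if `g : ℝ^T → ℝ` is convex and differentiable, `p* = ∇g(Σ_i x*_i)`, and each `x*_i` is the
strictly unique minimizer of `y ↦ f_i(y) + ⟨p*, y⟩`, then `(x*_i)` globally minimizes the
social welfare cost `x ↦ Σ_i f_i(x_i) + g(Σ_i x_i)`. -/
theorem equilibrium_price_induces_social_optimum_multi
    (T : ℕ) (hT : 1 ≤ T)
    (I : Type*) [Fintype I]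
    (f : I → EuclideanSpace ℝ (Fin T) → ℝ) (g : EuclideanSpace ℝ (Fin T) → ℝ)
    (hgconv : ConvexOn ℝ Set.univ g) (hgdiff : Differentiable ℝ g)
    (xstar : I → EuclideanSpace ℝ (Fin T)) (sstar pstar : EuclideanSpace ℝ (Fin T))
    (hs : sstar = ∑ i, xstar i) (hp : pstar = gradient g sstar)
    (hmin : ∀ i : I, ∀ y : EuclideanSpace ℝ (Fin T), y ≠ xstar i →
      f i (xstar i) + ⟪pstar, xstar i⟫ < f i y + ⟪pstar, y⟫) :
    ∀ xhat : I → EuclideanSpace ℝ (Fin T),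
      (∑ i, f i (xstar i)) + g sstar ≤ (∑ i, f i (xhat i)) + g (∑ i, xhat i) :=
  equilibrium_price_induces_social_optimum_multi_general T I f g hgconv hgdiff xstar sstar pstar hs
    hp hmin
end

section
/- Let n ≥ 1, B an n×n symmetric positive definite matrix, s : ℝⁿ → ℝⁿ decreasing in the monotone-operator sense (⟨s(p) − s(q), p − q⟩ ≤ 0 for all p, q), and p* ∈ ℝⁿ with B·s(p*) = p*. Then for every p ≠ p*, ⟨B⁻¹(p − p*), B·s(p) − p⟩ < 0. -/
open Matrix

/-!
Write `d = p - p*` and `V(p) = ½ dᵀB⁻¹d`. Because `B s(p*) = p*`, the velocity is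
`B s(p) - p = B (s(p) - s(p*)) - d`, and symmetry of `B` cancels `B⁻¹` against `B` in the
first term. So `V̇ = ⟨s(p) - s(p*), d⟩ - dᵀB⁻¹d`: the first term is `≤ 0` by monotonicity
of `-s`, the second is `> 0` since `B⁻¹` is positive definite.
-/

namespace Matrix

variable {ι : Type*} [Fintype ι] [DecidableEq ι]

theorem IsSymm.inv_mulVec_dotProduct_mulVec {R : Type*} [CommRing R] {B : Matrix ι ι R}
    (hB : B.IsSymm) (hdet : IsUnit B.det) (x y : ι → R) :
    B⁻¹ *ᵥ x ⬝ᵥ B *ᵥ y = x ⬝ᵥ y := by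
  rw [dotProduct_mulVec, ← hB.eq, vecMul_transpose, mulVec_mulVec, hB.eq,
    mul_nonsing_inv _ hdet, one_mulVec]

theorem PosDef.inv_mulVec_dotProduct_self_pos {K : Type*} [Field K] [PartialOrder K]
    [StarRing K] [TrivialStar K] {B : Matrix ι ι K} (hB : B.PosDef) {x : ι → K} (hx : x ≠ 0) :
    0 < B⁻¹ *ᵥ x ⬝ᵥ x := by
  simpa only [star_trivial, dotProduct_comm x] using hB.inv.dotProduct_mulVec_pos hx

end Matrix

theorem inv_mulVec_dotProduct_mulVec_sub_of_fixedPoint {ι R : Type*} [Fintype ι] [DecidableEq ι]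
    [CommRing R] {B : Matrix ι ι R} (hB : B.IsSymm) (hdet : IsUnit B.det)
    {s : (ι → R) → ι → R} {pstar : ι → R} (hfix : B *ᵥ s pstar = pstar) (p : ι → R) :
    B⁻¹ *ᵥ (p - pstar) ⬝ᵥ (B *ᵥ s p - p)
      = (s p - s pstar) ⬝ᵥ (p - pstar) - B⁻¹ *ᵥ (p - pstar) ⬝ᵥ (p - pstar) := by
  have hvelocity : B *ᵥ s p - p = B *ᵥ (s p - s pstar) - (p - pstar) := by
    rw [mulVec_sub, hfix]
    abel
  rw [hvelocity, dotProduct_sub, hB.inv_mulVec_dotProduct_mulVec hdet, dotProduct_comm (p - pstar)]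

theorem lyapunov_derivative_neg_quadratic_general
    (n : ℕ)
    (B : Matrix (Fin n) (Fin n) ℝ) (hBpos : B.PosDef)
    (s : (Fin n → ℝ) → (Fin n → ℝ))
    (hdec : ∀ p q : Fin n → ℝ, (s p - s q) ⬝ᵥ (p - q) ≤ 0)
    (pstar : Fin n → ℝ) (hfix : B.mulVec (s pstar) = pstar) :
    ∀ p : Fin n → ℝ, p ≠ pstar →
      (B⁻¹.mulVec (p - pstar)) ⬝ᵥ (B.mulVec (s p) - p) < 0 := by
  intro p hp
  have hsymm : B.IsSymm := isHermitian_iff_isSymm.mp hBpos.isHermitian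
  have hdet : IsUnit B.det := (isUnit_iff_isUnit_det B).mp hBpos.isUnit
  rw [inv_mulVec_dotProduct_mulVec_sub_of_fixedPoint hsymm hdet hfix]
  have hpos := hBpos.inv_mulVec_dotProduct_self_pos (sub_ne_zero.mpr hp)
  linarith [hdec p pstar]

/-- Lyapunov-derivative inequality for Theorem 2, case 1 (quadratic aggregate cost):
if `B` is symmetric positive definite, `s` is decreasing in the monotone-operator sense,
and `B·s(p*) = p*`, then for every `p ≠ p*` the time derivative of
`V(p) = ½(p - p*)ᵀB⁻¹(p - p*)` along `ṗ = B·s(p) - p`, namely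
`⟨B⁻¹(p - p*), B·s(p) - p⟩`, is negative. -/
theorem lyapunov_derivative_neg_quadratic
    (n : ℕ) (hn : 1 ≤ n)
    (B : Matrix (Fin n) (Fin n) ℝ) (hBsymm : B.IsSymm) (hBpos : B.PosDef)
    (s : (Fin n → ℝ) → (Fin n → ℝ))
    (hdec : ∀ p q : Fin n → ℝ, (s p - s q) ⬝ᵥ (p - q) ≤ 0)
    (pstar : Fin n → ℝ) (hfix : B.mulVec (s pstar) = pstar) :
    ∀ p : Fin n → ℝ, p ≠ pstar →
      (B⁻¹.mulVec (p - pstar)) ⬝ᵥ (B.mulVec (s p) - p) < 0 :=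
  lyapunov_derivative_neg_quadratic_general n B hBpos s hdec pstar hfix
end

section
/- Let n ≥ 1, B an n×n symmetric positive definite matrix, s : ℝⁿ → ℝⁿ decreasing in the monotone-operator sense (⟨s(p) − s(q), p − q⟩ ≤ 0 for all p, q), and p* ∈ ℝⁿ with B·s(p*) = p*. Let p : ℝ → ℝⁿ be differentiable with p'(t) = B·s(p(t)) − p(t) for all t ≥ 0, and define V(q) = ½⟨q − p*, B⁻¹(q − p*)⟩. Then V(p(t)) ≤ e^{−2t}·V(p(0)) for all t ≥ 0, and p(t) → p* as t → ∞. -/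
/-! Along a trajectory the derivative of `V` is `⟨p - p*, B⁻¹(B s(p) - p)⟩`. Since
`B⁻¹ p* = s(p*)`, this equals `⟨p - p*, s(p) - s(p*)⟩ - 2 V(p) ≤ -2 V(p)` by monotonicity of `s`,
and Grönwall's inequality gives `V(p t) ≤ e^{-2t} V(p 0)`. Convergence `p t → p*` then follows
because the positive definite form `B⁻¹` dominates a multiple of `‖·‖²`. -/

open Filter Matrix Topology

section DotProductDeriv

variable {ι κ : Type*} [Fintype ι] {u w : ℝ → ι → ℝ} {u' w' : ι → ℝ} {t : ℝ}

theorem HasDerivAt.dotProduct (hu : HasDerivAt u u' t) (hw : HasDerivAt w w' t) :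
    HasDerivAt (fun τ ↦ u τ ⬝ᵥ w τ) (u' ⬝ᵥ w t + u t ⬝ᵥ w') t := by
  have := HasDerivAt.fun_sum (u := Finset.univ) fun i _ ↦
    (hasDerivAt_pi.mp hu i).fun_mul (hasDerivAt_pi.mp hw i)
  rw [Finset.sum_add_distrib] at this
  exact this

theorem HasDerivAt.mulVec (A : Matrix κ ι ℝ) (hu : HasDerivAt u u' t) :
    HasDerivAt (fun τ ↦ A *ᵥ u τ) (A *ᵥ u') t :=
  hasDerivAt_pi.mpr fun i ↦ by
    have := (hasDerivAt_const t (A i)).dotProduct hu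
    rw [zero_dotProduct, zero_add] at this
    exact this

theorem HasDerivAt.dotProduct_mulVec_self {A : Matrix ι ι ℝ} (hA : A.IsSymm)
    (hu : HasDerivAt u u' t) :
    HasDerivAt (fun τ ↦ u τ ⬝ᵥ A *ᵥ u τ) (2 * (u t ⬝ᵥ A *ᵥ u')) t := by
  convert hu.dotProduct (hu.mulVec A) using 1
  rw [dotProduct_comm, dotProduct_mulVec, ← mulVec_transpose, hA.eq]
  ring

end DotProductDeriv

theorem le_exp_mul_of_hasDerivAt_le_mul {f f' : ℝ → ℝ} {K a : ℝ}
    (hf : ∀ t, a ≤ t → HasDerivAt f (f' t) t) (bound : ∀ t, a ≤ t → f' t ≤ K * f t)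
    {t : ℝ} (ht : a ≤ t) : f t ≤ Real.exp (K * (t - a)) * f a := by
  have := le_gronwallBound_of_liminf_deriv_right_le (f' := f') (ε := 0) (b := t)
    (fun x hx ↦ (hf x hx.1).continuousAt.continuousWithinAt)
    (fun x hx _ hr ↦ (hf x hx.1).hasDerivWithinAt.liminf_right_slope_le hr) le_rfl
    (fun x hx ↦ by simpa using bound x hx.1) t ⟨ht, le_rfl⟩
  rwa [gronwallBound_ε0, mul_comm] at this

theorem Matrix.PosDef.exists_pos_mul_norm_sq_le {ι : Type*} [Fintype ι] {A : Matrix ι ι ℝ}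
    (hA : A.PosDef) : ∃ c > 0, ∀ x, c * ‖x‖ ^ 2 ≤ x ⬝ᵥ A *ᵥ x := by
  rcases subsingleton_or_nontrivial (ι → ℝ) with _ | _
  · exact ⟨1, one_pos, fun x ↦ by simp [Subsingleton.elim x 0]⟩
  set Q : (ι → ℝ) → ℝ := fun x ↦ x ⬝ᵥ A *ᵥ x
  have hQ : Continuous Q := by fun_prop
  obtain ⟨x₀, hx₀, hmin⟩ := (isCompact_sphere (0 : ι → ℝ) 1).exists_isMinOn
    (NormedSpace.sphere_nonempty.mpr zero_le_one) hQ.continuousOn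
  have hx₀ : x₀ ≠ 0 := ne_zero_of_mem_unit_sphere ⟨x₀, hx₀⟩
  refine ⟨Q x₀, by simpa using hA.dotProduct_mulVec_pos hx₀, fun x ↦ ?_⟩
  rcases eq_or_ne x 0 with rfl | hx
  · simp [Q]
  have hnorm : 0 < ‖x‖ := norm_pos_iff.mpr hx
  have hunit : ‖x‖⁻¹ • x ∈ Metric.sphere (0 : ι → ℝ) 1 := by
    simp [norm_smul, hnorm.ne']
  have hhom : Q (‖x‖⁻¹ • x) = (‖x‖ ^ 2)⁻¹ * Q x := by
    simp only [Q, mulVec_smul, smul_dotProduct, dotProduct_smul, smul_eq_mul]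
    ring
  have hle := hmin hunit
  rw [Set.mem_ofPred_eq, hhom] at hle
  rwa [le_inv_mul_iff₀ (by positivity), mul_comm] at hle

theorem Matrix.PosDef.tendsto_of_tendsto_dotProduct_mulVec_sub {ι α : Type*} [Fintype ι]
    {A : Matrix ι ι ℝ} (hA : A.PosDef) {l : Filter α} {f : α → ι → ℝ} {x : ι → ℝ}
    (h : Tendsto (fun a ↦ (f a - x) ⬝ᵥ A *ᵥ (f a - x)) l (𝓝 0)) : Tendsto f l (𝓝 x) := by
  obtain ⟨c, hc, hcoer⟩ := hA.exists_pos_mul_norm_sq_le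
  have hbound : ∀ a, ‖f a - x‖ ≤ √((f a - x) ⬝ᵥ A *ᵥ (f a - x) / c) := fun a ↦
    Real.le_sqrt_of_sq_le ((le_div_iff₀ hc).mpr (by linarith [hcoer (f a - x)]))
  have hlim := (h.div_const c).sqrt
  rw [zero_div, Real.sqrt_zero] at hlim
  exact tendsto_iff_norm_sub_tendsto_zero.mpr
    (squeeze_zero (fun _ ↦ norm_nonneg _) hbound hlim)

theorem dotProduct_inv_mulVec_mulVec_sub_le_neg {ι : Type*} [Fintype ι] [DecidableEq ι]
    {B : Matrix ι ι ℝ} (hB : IsUnit B.det) {s : (ι → ℝ) → ι → ℝ}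
    (hs : ∀ p q, (s p - s q) ⬝ᵥ (p - q) ≤ 0) {pstar : ι → ℝ} (hfix : B *ᵥ s pstar = pstar)
    (q : ι → ℝ) :
    (q - pstar) ⬝ᵥ B⁻¹ *ᵥ (B *ᵥ s q - q) ≤ -((q - pstar) ⬝ᵥ B⁻¹ *ᵥ (q - pstar)) := by
  have hinv : ∀ v, B⁻¹ *ᵥ (B *ᵥ v) = v := fun v ↦ by
    rw [mulVec_mulVec, nonsing_inv_mul B hB, one_mulVec]
  have hstar : B⁻¹ *ᵥ pstar = s pstar := by simpa [hinv] using (congrArg (B⁻¹ *ᵥ ·) hfix).symm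
  have hfield : B⁻¹ *ᵥ (B *ᵥ s q - q) = (s q - s pstar) - B⁻¹ *ᵥ (q - pstar) := by
    rw [mulVec_sub, mulVec_sub, hinv, hstar]
    abel
  rw [hfield, dotProduct_sub, dotProduct_comm]
  linarith [hs q pstar]

theorem quadratic_lyapunov_exp_decay_general
    (n : ℕ)
    (B : Matrix (Fin n) (Fin n) ℝ) (hBpos : B.PosDef)
    (s : (Fin n → ℝ) → (Fin n → ℝ))
    (hdec : ∀ p q : Fin n → ℝ, (s p - s q) ⬝ᵥ (p - q) ≤ 0)
    (pstar : Fin n → ℝ) (hfix : B.mulVec (s pstar) = pstar)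
    (p : ℝ → (Fin n → ℝ)) (hdiff : Differentiable ℝ p)
    (hode : ∀ t : ℝ, 0 ≤ t → deriv p t = B.mulVec (s (p t)) - p t)
    (V : (Fin n → ℝ) → ℝ)
    (hV : ∀ q : Fin n → ℝ, V q = (1 / 2) * ((q - pstar) ⬝ᵥ B⁻¹.mulVec (q - pstar))) :
    (∀ t : ℝ, 0 ≤ t → V (p t) ≤ Real.exp (-2 * t) * V (p 0)) ∧
      Tendsto p atTop (nhds pstar) := by
  have hA : B⁻¹.PosDef := hBpos.inv
  have hV_deriv (t : ℝ) :
      HasDerivAt (fun τ ↦ V (p τ)) ((p t - pstar) ⬝ᵥ B⁻¹ *ᵥ deriv p t) t := by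
    have := (((hdiff t).hasDerivAt.sub_const pstar).dotProduct_mulVec_self
      (isHermitian_iff_isSymm.mp hA.isHermitian)).const_mul (1 / 2)
    simp only [hV]
    exact this.congr_deriv (by ring)
  have hV_dissipation (t : ℝ) (ht : 0 ≤ t) :
      (p t - pstar) ⬝ᵥ B⁻¹ *ᵥ deriv p t ≤ -2 * V (p t) := by
    rw [hode t ht, hV]
    linarith [dotProduct_inv_mulVec_mulVec_sub_le_neg hBpos.det_pos.ne'.isUnit hdec hfix (p t)]
  have hdecay (t : ℝ) (ht : 0 ≤ t) : V (p t) ≤ Real.exp (-2 * t) * V (p 0) := by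
    simpa using le_exp_mul_of_hasDerivAt_le_mul (fun t _ ↦ hV_deriv t) hV_dissipation ht
  refine ⟨hdecay, hA.tendsto_of_tendsto_dotProduct_mulVec_sub ?_⟩
  have hexp : Tendsto (fun t : ℝ ↦ Real.exp (-2 * t)) atTop (𝓝 0) :=
    Real.tendsto_exp_atBot.comp (tendsto_id.const_mul_atTop_of_neg (by norm_num))
  refine squeeze_zero'
    (.of_forall fun t ↦ by simpa using hA.posSemidef.dotProduct_mulVec_nonneg (p t - pstar))
    ?_ (by simpa only [zero_mul, mul_zero] using (hexp.mul_const (V (p 0))).const_mul 2)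
  filter_upwards [eventually_ge_atTop 0] with t ht
  linarith [hdecay t ht, hV (p t)]

/-- Theorem 2, case 1 (quadratic aggregate cost `g(z) = ½ zᵀBz`): with `B` symmetric
positive definite, `s` decreasing in the monotone-operator sense, and equilibrium
`p* = B·s(p*)`, the Lyapunov function `V(q) = ½⟨q - p*, B⁻¹(q - p*)⟩` decays exponentially
along the dynamics `ṗ = B·s(p) - p`, and `p(t) → p*` as `t → ∞`. -/
theorem quadratic_lyapunov_exp_decay
    (n : ℕ) (hn : 1 ≤ n)
    (B : Matrix (Fin n) (Fin n) ℝ) (hBsymm : B.IsSymm) (hBpos : B.PosDef)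
    (s : (Fin n → ℝ) → (Fin n → ℝ))
    (hdec : ∀ p q : Fin n → ℝ, (s p - s q) ⬝ᵥ (p - q) ≤ 0)
    (pstar : Fin n → ℝ) (hfix : B.mulVec (s pstar) = pstar)
    (p : ℝ → (Fin n → ℝ)) (hdiff : Differentiable ℝ p)
    (hode : ∀ t : ℝ, 0 ≤ t → deriv p t = B.mulVec (s (p t)) - p t)
    (V : (Fin n → ℝ) → ℝ)
    (hV : ∀ q : Fin n → ℝ, V q = (1 / 2) * ((q - pstar) ⬝ᵥ B⁻¹.mulVec (q - pstar))) :
    (∀ t : ℝ, 0 ≤ t → V (p t) ≤ Real.exp (-2 * t) * V (p 0)) ∧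
      Tendsto p atTop (nhds pstar) :=
  quadratic_lyapunov_exp_decay_general n B hBpos s hdec pstar hfix p hdiff hode V hV
end
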